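/- For any density matrix ρ on ℂ^d, the geometric measure of texture is bounded below by the squared trace distance to the textureless state: T_g(ρ) ≥ [D(ρ, f₁)]². -/

import Mathlib

open Matrix BigOperators Finset ComplexOrder

noncomputable section

abbrev Mat (d : ℕ) := Matrix (Fin d) (Fin d) ℂ

def IsDensity {d : ℕ} (ρ : Mat d) : Prop := ρ.PosSemidef ∧ ρ.trace = 1

def outer {d : ℕ} (ψ : Fin d → ℂ) : Mat d := Matrix.vecMulVec ψ (star ψ)

def f1vec (d : ℕ) : Fin d → ℂ := fun _ => ((Real.sqrt d)⁻¹ : ℝ)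

def f1 (d : ℕ) : Mat d := outer (f1vec d)

/-- The old Mathlib `Matrix.PosSemidef.sqrt`, removed since, spelled out with its old definition. -/
noncomputable def PosSemidefSqrt {n : Type*} [Fintype n] [DecidableEq n] {A : Matrix n n ℂ}
    (hA : A.PosSemidef) : Matrix n n ℂ :=
  hA.1.eigenvectorUnitary.1 * diagonal ((↑) ∘ (√·) ∘ hA.1.eigenvalues) *
  (star hA.1.eigenvectorUnitary : Matrix n n ℂ)

noncomputable def traceNorm {d : ℕ} (A : Mat d) : ℝ :=
  (PosSemidefSqrt (Matrix.posSemidef_conjTranspose_mul_self A)).trace.re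

noncomputable def Ttr {d : ℕ} (ρ : Mat d) : ℝ := (1/2) * traceNorm (ρ - f1 d)

noncomputable def fidF1 {d : ℕ} (ρ : Mat d) : ℝ := (star (f1vec d) ⬝ᵥ (ρ *ᵥ f1vec d)).re

noncomputable def TF {d : ℕ} (ρ : Mat d) : ℝ := 1 - fidF1 ρ

noncomputable def TB {d : ℕ} (ρ : Mat d) : ℝ := 2 * (1 - Real.sqrt (fidF1 ρ))

noncomputable def Tg {d : ℕ} (ρ : Mat d) : ℝ :=
  sInf { x | ∃ (n : ℕ) (p : Fin n → ℝ) (ψ : Fin n → (Fin d → ℂ)),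
    (∀ i, 0 ≤ p i) ∧ (∑ i, p i = 1) ∧ (∀ i, star (ψ i) ⬝ᵥ ψ i = 1) ∧
    ρ = ∑ i, (p i : ℂ) • outer (ψ i) ∧
    x = ∑ i, p i * (1 - ‖star (f1vec d) ⬝ᵥ ψ i‖^2) }

/-!
Fix a decomposition `ρ = ∑ pᵢ |ψᵢ⟩⟨ψᵢ|` into pure states and put `tᵢ = 1 - |⟨f₁|ψᵢ⟩|²`. Convexity
of the trace norm gives `D(ρ, f₁) ≤ ∑ pᵢ D(ψᵢ, f₁) = ∑ pᵢ √tᵢ`, and Jensen's inequality gives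
`(∑ pᵢ √tᵢ)² ≤ ∑ pᵢ tᵢ`; taking the infimum over decompositions proves the claim.

Convexity comes from the variational formula `‖A‖₁ = max {Re tr (M A) : -1 ≤ M ≤ 1}` for Hermitian
`A`, attained at `M = sign A`. For the pure-state distance, `A = P - Q` with `P`, `Q` rank-one
projections satisfies `A³ = t A` and `tr A² = 2 t`, so each eigenvalue of `A` is `0` or `±√t` and
`‖A‖₁ = ∑ μᵢ² / √t = 2 √t`.
-/

namespace Matrix.IsHermitian

variable {n 𝕜 : Type*} [Fintype n] [DecidableEq n] [RCLike 𝕜] {A : Matrix n n 𝕜}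
  (hA : A.IsHermitian)

lemma cfc_id_eq : hA.cfc id = A := hA.spectral_theorem.symm

lemma cfc_mul_cfc (f g : ℝ → ℝ) : hA.cfc f * hA.cfc g = hA.cfc (f * g) := by
  simp only [IsHermitian.cfc, ← map_mul, diagonal_mul_diagonal]
  congr 2 with i
  simp

lemma neg_cfc (f : ℝ → ℝ) : -hA.cfc f = hA.cfc (-f) := by
  rw [IsHermitian.cfc, IsHermitian.cfc, ← map_neg, diagonal_neg]
  congr 2 with i
  simp

lemma one_sub_cfc (f : ℝ → ℝ) : 1 - hA.cfc f = hA.cfc (1 - f) := by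
  rw [IsHermitian.cfc, IsHermitian.cfc, ← map_one (Unitary.conjStarAlgAut 𝕜 _ hA.eigenvectorUnitary),
    ← map_sub, ← diagonal_one, diagonal_sub]
  congr 2 with i
  simp

lemma trace_cfc (f : ℝ → ℝ) : (hA.cfc f).trace = ∑ i, (f (hA.eigenvalues i) : 𝕜) := by
  rw [IsHermitian.cfc, Unitary.conjStarAlgAut_apply, trace_mul_cycle, Unitary.coe_star_mul_self,
    one_mul, trace_diagonal]
  rfl

lemma posSemidef_cfc {f : ℝ → ℝ} (hf : ∀ x, 0 ≤ f x) : (hA.cfc f).PosSemidef := by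
  rw [IsHermitian.cfc, Unitary.conjStarAlgAut_apply]
  exact (posSemidef_diagonal_iff.mpr fun i => by simpa using hf _).mul_mul_conjTranspose_same _

lemma trace_mul_self : (A * A).trace = ∑ i, ((hA.eigenvalues i ^ 2 : ℝ) : 𝕜) := by
  conv_lhs => rw [← hA.cfc_id_eq, hA.cfc_mul_cfc, hA.trace_cfc]
  simp [sq]

lemma star_dotProduct_eigenvectorBasis (i : n) :
    star ⇑(hA.eigenvectorBasis i) ⬝ᵥ ⇑(hA.eigenvectorBasis i) = 1 := by
  rw [dotProduct_comm, ← EuclideanSpace.inner_eq_star_dotProduct, hA.eigenvectorBasis.inner_eq_one]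

lemma eigenvalues_pow_eq {k : ℕ} {t : ℝ} (h : A ^ k = (t : 𝕜) • A) (i : n) :
    hA.eigenvalues i ^ k = t * hA.eigenvalues i := by
  set v : n → 𝕜 := ⇑(hA.eigenvectorBasis i)
  have hpow : ∀ m : ℕ, (A ^ m) *ᵥ v = (hA.eigenvalues i ^ m) • v := by
    intro m
    induction m with
    | zero => simp
    | succ m ih =>
      rw [pow_succ, ← mulVec_mulVec, hA.mulVec_eigenvectorBasis, mulVec_smul, ih, smul_smul,
        ← pow_succ']
  have hv : v ≠ 0 := by
    intro hv
    have hunit : star v ⬝ᵥ v = 1 := hA.star_dotProduct_eigenvectorBasis i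
    simp [hv] at hunit
  refine smul_left_injective ℝ hv (?_ : hA.eigenvalues i ^ k • v = (t * hA.eigenvalues i) • v)
  rw [← hpow k, h, smul_mulVec, hA.mulVec_eigenvectorBasis, mul_smul,
    RCLike.real_smul_eq_coe_smul (K := 𝕜) t]

end Matrix.IsHermitian

theorem sub_pow_three_of_isIdempotentElem {R S : Type*} [CommRing S] [Ring R] [Algebra S R]
    {P Q : R} (hP : IsIdempotentElem P) (hQ : IsIdempotentElem Q) {s : S}
    (hPQP : P * Q * P = s • P) (hQPQ : Q * P * Q = s • Q) :
    (P - Q) ^ 3 = (1 - s) • (P - Q) := by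
  have h : (P - Q) ^ 3 = P * P * P - P * P * Q - P * Q * P + P * (Q * Q) - Q * P * P
      + Q * P * Q + Q * Q * P - Q * Q * Q := by noncomm_ring
  rw [h, hP.eq, hQ.eq, hP.eq, hQ.eq, hPQP, hQPQ, mul_assoc Q P P, hP.eq]
  module

lemma abs_eq_sq_div_sqrt_of_pow_three_eq {μ t : ℝ} (h : μ ^ 3 = t * μ) : |μ| = μ ^ 2 / √t := by
  rcases eq_or_ne μ 0 with rfl | hμ
  · simp
  · have hsq : μ ^ 2 = t := mul_right_cancel₀ hμ (by rw [← pow_succ, h])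
    rw [← hsq, Real.div_sqrt, Real.sqrt_sq_eq_abs]

lemma sq_sum_mul_sqrt_le {ι : Type*} [Fintype ι] {p t : ι → ℝ} (hp0 : ∀ i, 0 ≤ p i)
    (hp1 : ∑ i, p i = 1) (ht : ∀ i, 0 ≤ t i) : (∑ i, p i * √(t i)) ^ 2 ≤ ∑ i, p i * t i := by
  have := (even_two.convexOn_pow (𝕜 := ℝ)).map_sum_le (t := Finset.univ) (w := p)
    (p := fun i => √(t i)) (fun i _ => hp0 i) hp1 (fun i _ => Set.mem_univ _)
  simpa only [smul_eq_mul, Real.sq_sqrt (ht _)] using this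

section

variable {d : ℕ}

lemma Matrix.IsHermitian.eq_sum_smul_outer {A : Mat d} (hA : A.IsHermitian) :
    A = ∑ i, (hA.eigenvalues i : ℂ) • outer ⇑(hA.eigenvectorBasis i) := by
  conv_lhs => rw [hA.spectral_theorem, Unitary.conjStarAlgAut_apply]
  ext j k
  rw [mul_apply, Matrix.sum_apply]
  simp only [mul_diagonal, Matrix.smul_apply, outer, vecMulVec_apply, star_apply,
    eigenvectorUnitary_apply, Function.comp_apply, smul_eq_mul, Pi.star_apply,
    RCLike.ofReal_eq_complex_ofReal]
  exact Finset.sum_congr rfl fun i _ => by ring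

lemma traceNorm_nonneg (A : Mat d) : 0 ≤ traceNorm A := by
  have hsqrt : (PosSemidefSqrt (posSemidef_conjTranspose_mul_self A)).PosSemidef :=
    (posSemidef_conjTranspose_mul_self A).1.posSemidef_cfc Real.sqrt_nonneg
  exact (Complex.nonneg_iff.mp hsqrt.trace_nonneg).1

lemma traceNorm_eq_re_trace_cfc_abs {A : Mat d} (hA : A.IsHermitian) :
    traceNorm A = (hA.cfc (|·|)).trace.re := by
  have hsq : Aᴴ * A = A ^ 2 := by rw [hA.eq, sq]
  have hsqrt : PosSemidefSqrt (posSemidef_conjTranspose_mul_self A) = hA.cfc (|·|) := by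
    change (posSemidef_conjTranspose_mul_self A).1.cfc Real.sqrt = _
    rw [← IsHermitian.cfc_eq, ← IsHermitian.cfc_eq, hsq, ← cfc_comp_pow Real.sqrt 2 A]
    simp only [Real.sqrt_sq_eq_abs]
  rw [traceNorm, hsqrt]

lemma traceNorm_eq_sum_abs_eigenvalues {A : Mat d} (hA : A.IsHermitian) :
    traceNorm A = ∑ i, |hA.eigenvalues i| := by
  rw [traceNorm_eq_re_trace_cfc_abs hA, hA.trace_cfc, Complex.re_sum]
  rfl

lemma trace_mul_outer (M : Mat d) (ψ : Fin d → ℂ) :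
    (M * outer ψ).trace = star ψ ⬝ᵥ (M *ᵥ ψ) := by
  simp only [outer, trace, Matrix.diag, mul_apply, vecMulVec_apply, dotProduct, mulVec,
    Finset.mul_sum, Pi.star_apply]
  exact Finset.sum_congr rfl fun i _ => Finset.sum_congr rfl fun j _ => by ring

lemma abs_re_star_dotProduct_mulVec_le_one {M : Mat d} (h₁ : (1 - M).PosSemidef)
    (h₂ : (1 + M).PosSemidef) {ψ : Fin d → ℂ} (hψ : star ψ ⬝ᵥ ψ = 1) :
    |(star ψ ⬝ᵥ (M *ᵥ ψ)).re| ≤ 1 := by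
  have h₁ψ := h₁.re_dotProduct_nonneg ψ
  have h₂ψ := h₂.re_dotProduct_nonneg ψ
  simp only [sub_mulVec, add_mulVec, one_mulVec, dotProduct_sub, dotProduct_add, hψ,
    RCLike.re_to_complex, Complex.sub_re, Complex.add_re, Complex.one_re] at h₁ψ h₂ψ
  exact abs_le.mpr ⟨by linarith, by linarith⟩

lemma re_trace_mul_le_traceNorm {M A : Mat d} (h₁ : (1 - M).PosSemidef) (h₂ : (1 + M).PosSemidef)
    (hA : A.IsHermitian) : (M * A).trace.re ≤ traceNorm A := by
  rw [traceNorm_eq_sum_abs_eigenvalues hA]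
  conv_lhs => rw [hA.eq_sum_smul_outer]
  rw [Finset.mul_sum, trace_sum, Complex.re_sum]
  refine Finset.sum_le_sum fun i _ => ?_
  rw [mul_smul_comm, trace_smul, trace_mul_outer, smul_eq_mul, Complex.re_ofReal_mul]
  calc hA.eigenvalues i * _ ≤ |hA.eigenvalues i| * |_| := by rw [← abs_mul]; exact le_abs_self _
    _ ≤ |hA.eigenvalues i| := mul_le_of_le_one_right (abs_nonneg _)
          (abs_re_star_dotProduct_mulVec_le_one h₁ h₂ (hA.star_dotProduct_eigenvectorBasis i))

lemma exists_re_trace_mul_eq_traceNorm {A : Mat d} (hA : A.IsHermitian) :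
    ∃ M : Mat d, (1 - M).PosSemidef ∧ (1 + M).PosSemidef ∧ (M * A).trace.re = traceNorm A := by
  have hsign : ∀ x : ℝ, |(SignType.sign x : ℝ)| ≤ 1 := fun x => by
    rcases SignType.sign x with _ | _ | _ <;> norm_num
  refine ⟨hA.cfc (fun x => SignType.sign x), ?_, ?_, ?_⟩
  · rw [hA.one_sub_cfc]
    exact hA.posSemidef_cfc fun x => sub_nonneg.mpr (abs_le.mp (hsign x)).2
  · rw [← sub_neg_eq_add, hA.neg_cfc, hA.one_sub_cfc]
    exact hA.posSemidef_cfc fun x => sub_nonneg.mpr (neg_le.mp (abs_le.mp (hsign x)).1)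
  · have hsign_mul : hA.cfc (fun x => SignType.sign x) * A = hA.cfc (|·|) := by
      conv_lhs => arg 2; rw [← hA.cfc_id_eq]
      rw [hA.cfc_mul_cfc]
      congr 1 with x
      exact sign_mul_self x
    rw [hsign_mul, traceNorm_eq_re_trace_cfc_abs hA]

lemma traceNorm_sum_smul_le {ι : Type*} [Fintype ι] {p : ι → ℝ} (hp : ∀ i, 0 ≤ p i)
    {C : ι → Mat d} (hC : ∀ i, (C i).IsHermitian) :
    traceNorm (∑ i, (p i : ℂ) • C i) ≤ ∑ i, p i * traceNorm (C i) := by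
  have hH : (∑ i, (p i : ℂ) • C i).IsHermitian :=
    isSelfAdjoint_sum _ fun i _ => (hC i).smul (Complex.conj_ofReal (p i))
  obtain ⟨M, h₁, h₂, hM⟩ := exists_re_trace_mul_eq_traceNorm hH
  rw [← hM, Finset.mul_sum, trace_sum, Complex.re_sum]
  gcongr with i
  rw [mul_smul_comm, trace_smul, smul_eq_mul, Complex.re_ofReal_mul]
  exact mul_le_mul_of_nonneg_left (re_trace_mul_le_traceNorm h₁ h₂ (hC i)) (hp i)

lemma isHermitian_outer (ψ : Fin d → ℂ) : (outer ψ).IsHermitian :=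
  (posSemidef_vecMulVec_self_star ψ).isHermitian

lemma outer_mul_outer (ψ φ : Fin d → ℂ) :
    outer ψ * outer φ = (star ψ ⬝ᵥ φ) • vecMulVec ψ (star φ) := by
  rw [outer, outer, vecMulVec_mul_vecMulVec, vecMulVec_smul]

lemma isIdempotentElem_outer {ψ : Fin d → ℂ} (hψ : star ψ ⬝ᵥ ψ = 1) :
    IsIdempotentElem (outer ψ) := by
  rw [IsIdempotentElem, outer_mul_outer, hψ, one_smul, outer]

lemma trace_outer {ψ : Fin d → ℂ} (hψ : star ψ ⬝ᵥ ψ = 1) : (outer ψ).trace = 1 := by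
  rw [outer, trace_vecMulVec, dotProduct_comm, hψ]

lemma norm_star_dotProduct_comm (ψ φ : Fin d → ℂ) : ‖star ψ ⬝ᵥ φ‖ = ‖star φ ⬝ᵥ ψ‖ := by
  rw [star_dotProduct, norm_star]

lemma star_dotProduct_mul_star_dotProduct (ψ φ : Fin d → ℂ) :
    (star ψ ⬝ᵥ φ) * (star φ ⬝ᵥ ψ) = ((‖star φ ⬝ᵥ ψ‖ ^ 2 : ℝ) : ℂ) := by
  rw [star_dotProduct ψ φ, Complex.ofReal_pow, ← Complex.conj_mul']
  rfl

lemma outer_mul_outer_mul_outer (ψ φ : Fin d → ℂ) :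
    outer ψ * outer φ * outer ψ = ((‖star φ ⬝ᵥ ψ‖ ^ 2 : ℝ) : ℂ) • outer ψ := by
  rw [outer_mul_outer, smul_mul_assoc, outer, vecMulVec_mul_vecMulVec, vecMulVec_smul, smul_smul,
    star_dotProduct_mul_star_dotProduct]

lemma trace_outer_mul_outer (ψ φ : Fin d → ℂ) :
    (outer ψ * outer φ).trace = ((‖star φ ⬝ᵥ ψ‖ ^ 2 : ℝ) : ℂ) := by
  rw [outer_mul_outer, trace_smul, trace_vecMulVec, dotProduct_comm ψ, smul_eq_mul,
    star_dotProduct_mul_star_dotProduct]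

lemma trace_outer_sub_outer_sq {ψ φ : Fin d → ℂ} (hψ : star ψ ⬝ᵥ ψ = 1) (hφ : star φ ⬝ᵥ φ = 1) :
    ((outer ψ - outer φ) * (outer ψ - outer φ)).trace
      = ((2 * (1 - ‖star φ ⬝ᵥ ψ‖ ^ 2) : ℝ) : ℂ) := by
  rw [sub_mul, mul_sub, mul_sub, (isIdempotentElem_outer hψ).eq, (isIdempotentElem_outer hφ).eq]
  simp only [trace_sub, trace_mul_comm (outer φ) (outer ψ), trace_outer hψ, trace_outer hφ,
    trace_outer_mul_outer]
  push_cast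
  ring

lemma sum_sq_eigenvalues_outer_sub_outer {ψ φ : Fin d → ℂ} (hψ : star ψ ⬝ᵥ ψ = 1)
    (hφ : star φ ⬝ᵥ φ = 1) (hA : (outer ψ - outer φ).IsHermitian) :
    ∑ i, hA.eigenvalues i ^ 2 = 2 * (1 - ‖star φ ⬝ᵥ ψ‖ ^ 2) := by
  have h := hA.trace_mul_self
  simp only [trace_outer_sub_outer_sq hψ hφ, RCLike.ofReal_eq_complex_ofReal, ← Complex.ofReal_sum,
    Complex.ofReal_inj] at h
  exact h.symm

lemma norm_star_dotProduct_sq_le_one {ψ φ : Fin d → ℂ} (hψ : star ψ ⬝ᵥ ψ = 1)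
    (hφ : star φ ⬝ᵥ φ = 1) : ‖star φ ⬝ᵥ ψ‖ ^ 2 ≤ 1 := by
  have hA := (isHermitian_outer ψ).sub (isHermitian_outer φ)
  have hsum := sum_sq_eigenvalues_outer_sub_outer hψ hφ hA
  have : 0 ≤ ∑ i, hA.eigenvalues i ^ 2 := by positivity
  linarith

lemma traceNorm_outer_sub_outer {ψ φ : Fin d → ℂ} (hψ : star ψ ⬝ᵥ ψ = 1)
    (hφ : star φ ⬝ᵥ φ = 1) :
    traceNorm (outer ψ - outer φ) = 2 * √(1 - ‖star φ ⬝ᵥ ψ‖ ^ 2) := by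
  have hA := (isHermitian_outer ψ).sub (isHermitian_outer φ)
  have hcube : (outer ψ - outer φ) ^ 3
      = ((1 - ‖star φ ⬝ᵥ ψ‖ ^ 2 : ℝ) : ℂ) • (outer ψ - outer φ) := by
    rw [sub_pow_three_of_isIdempotentElem (isIdempotentElem_outer hψ) (isIdempotentElem_outer hφ)
      (outer_mul_outer_mul_outer ψ φ)
      (by rw [outer_mul_outer_mul_outer, norm_star_dotProduct_comm]), Complex.ofReal_sub,
      Complex.ofReal_one]
  rw [traceNorm_eq_sum_abs_eigenvalues hA]
  simp_rw [abs_eq_sq_div_sqrt_of_pow_three_eq (hA.eigenvalues_pow_eq (t := 1 - ‖star φ ⬝ᵥ ψ‖ ^ 2) hcube _)]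
  rw [← Finset.sum_div, sum_sq_eigenvalues_outer_sub_outer hψ hφ hA, mul_div_assoc, Real.div_sqrt]

lemma star_f1vec_dotProduct_self (hd : 0 < d) : star (f1vec d) ⬝ᵥ f1vec d = 1 := by
  simp only [dotProduct, f1vec, Pi.star_apply, Complex.star_def, Complex.conj_ofReal,
    Finset.sum_const, Finset.card_univ, Fintype.card_fin, nsmul_eq_mul]
  rw [← Complex.ofReal_mul, ← mul_inv, Real.mul_self_sqrt (Nat.cast_nonneg d), Complex.ofReal_inv,
    Complex.ofReal_natCast, mul_inv_cancel₀ (by exact_mod_cast hd.ne')]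

lemma Ttr_nonneg (ρ : Mat d) : 0 ≤ Ttr ρ := by
  unfold Ttr
  have := traceNorm_nonneg (ρ - f1 d)
  positivity

lemma IsDensity.exists_pure_decomposition {ρ : Mat d} (hρ : IsDensity ρ) :
    ∃ (p : Fin d → ℝ) (ψ : Fin d → Fin d → ℂ), (∀ i, 0 ≤ p i) ∧ ∑ i, p i = 1 ∧
      (∀ i, star (ψ i) ⬝ᵥ ψ i = 1) ∧ ρ = ∑ i, (p i : ℂ) • outer (ψ i) := by
  have hH := hρ.1.1
  refine ⟨hH.eigenvalues, fun i => ⇑(hH.eigenvectorBasis i), hρ.1.eigenvalues_nonneg,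
    ?_, hH.star_dotProduct_eigenvectorBasis, hH.eq_sum_smul_outer⟩
  have htrace := hH.trace_eq_sum_eigenvalues
  rw [hρ.2, ← Complex.ofReal_one] at htrace
  simp only [RCLike.ofReal_eq_complex_ofReal, ← Complex.ofReal_sum, Complex.ofReal_inj] at htrace
  exact htrace.symm

lemma Ttr_le_sum_mul_sqrt (hd : 0 < d) {ρ : Mat d} {n : ℕ} {p : Fin n → ℝ}
    {ψ : Fin n → Fin d → ℂ} (hp0 : ∀ i, 0 ≤ p i) (hp1 : ∑ i, p i = 1)
    (hψ : ∀ i, star (ψ i) ⬝ᵥ ψ i = 1) (hρ : ρ = ∑ i, (p i : ℂ) • outer (ψ i)) :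
    Ttr ρ ≤ ∑ i, p i * √(1 - ‖star (f1vec d) ⬝ᵥ ψ i‖ ^ 2) := by
  have hdiff : ρ - f1 d = ∑ i, (p i : ℂ) • (outer (ψ i) - f1 d) := by
    simp only [hρ, smul_sub, Finset.sum_sub_distrib, ← Finset.sum_smul, ← Complex.ofReal_sum, hp1,
      Complex.ofReal_one, one_smul]
  calc Ttr ρ ≤ 1 / 2 * ∑ i, p i * traceNorm (outer (ψ i) - f1 d) := by
        rw [Ttr, hdiff]
        gcongr
        exact traceNorm_sum_smul_le hp0 fun i => (isHermitian_outer _).sub (isHermitian_outer _)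
    _ = ∑ i, p i * √(1 - ‖star (f1vec d) ⬝ᵥ ψ i‖ ^ 2) := by
        simp only [f1, traceNorm_outer_sub_outer (hψ _) (star_f1vec_dotProduct_self hd),
          Finset.mul_sum]
        ring_nf

end

theorem stmt6 (d : ℕ) (hd : 0 < d) (ρ : Mat d) (hρ : IsDensity ρ) :
    Tg ρ ≥ (Ttr ρ)^2 := by
  obtain ⟨p, ψ, hp0, hp1, hψ, hρψ⟩ := hρ.exists_pure_decomposition
  refine le_csInf ⟨_, d, p, ψ, hp0, hp1, hψ, hρψ, rfl⟩ ?_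
  rintro _ ⟨n, p, ψ, hp0, hp1, hψ, hρψ, rfl⟩
  have ht : ∀ i, 0 ≤ 1 - ‖star (f1vec d) ⬝ᵥ ψ i‖ ^ 2 := fun i =>
    sub_nonneg.mpr (norm_star_dotProduct_sq_le_one (hψ i) (star_f1vec_dotProduct_self hd))
  calc Ttr ρ ^ 2 ≤ (∑ i, p i * √(1 - ‖star (f1vec d) ⬝ᵥ ψ i‖ ^ 2)) ^ 2 :=
        pow_le_pow_left₀ (Ttr_nonneg ρ) (Ttr_le_sum_mul_sqrt hd hp0 hp1 hψ hρψ) 2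
    _ ≤ _ := sq_sum_mul_sqrt_le hp0 hp1 ht
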